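/- arXiv:2102.05576 — 4 statements merged into one kernel-verified Lean document; each statement's English description precedes it below -/
import Mathlib

section
/- Let E be an m×n rational matrix of rank g. Then any two g×g non-singular principal submatrices of E^T E are congruent over ℚ. -/
open Matrix

/-!
Write `Bᵢ` for the columns `fᵢ` of `E`, so that the two principal submatrices are the Gram
matrices `Bᵢᵀ Bᵢ`. Since `B₁ᵀ B₁` is non-singular, `B₁` has rank `g = rank E`, so its columns span
the column space of `E`. Hence `B₂ = B₁ X` for some `X`, and then `B₂ᵀ B₂ = Xᵀ (B₁ᵀ B₁) X`;
`X` is invertible because `B₂ᵀ B₂` is.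
-/

namespace Matrix

variable {m n r l : Type*}

theorem transpose_mul_self_submatrix {α : Type*} [Mul α] [AddCommMonoid α] [Fintype m]
    (A : Matrix m n α) (f f' : r → n) :
    (Aᵀ * A).submatrix f f' = (A.submatrix id f)ᵀ * A.submatrix id f' := by
  rw [submatrix_mul _ _ f id f' Function.bijective_id, transpose_submatrix]

theorem rank_eq_card_of_isUnit_mul {R : Type*} [CommRing R] [StrongRankCondition R] [Fintype m]
    [Fintype r] [DecidableEq r] {C : Matrix r m R} {B : Matrix m r R} (h : IsUnit (C * B)) :
    B.rank = Fintype.card r :=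
  le_antisymm B.rank_le_card_width (rank_of_isUnit _ h ▸ rank_mul_le_right C B)

theorem span_col_submatrix_eq_of_rank_eq {K : Type*} [Field K] [Fintype m] [Fintype n]
    [Fintype r] {A : Matrix m n K} {f : r → n} (h : (A.submatrix id f).rank = A.rank) :
    Submodule.span K (Set.range (A.submatrix id f).col) = Submodule.span K (Set.range A.col) := by
  rw [rank_eq_finrank_span_cols, rank_eq_finrank_span_cols] at h
  exact Submodule.eq_of_le_of_finrank_eq
    (Submodule.span_mono (Set.range_comp_subset_range f A.col)) h

theorem exists_mul_eq_of_col_mem_span {R : Type*} [CommSemiring R] [Fintype n]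
    {A : Matrix m n R} {B : Matrix m l R}
    (h : ∀ j, B.col j ∈ Submodule.span R (Set.range A.col)) : ∃ X : Matrix n l R, B = A * X := by
  choose x hx using fun j => (Submodule.mem_span_range_iff_exists_fun R).1 (h j)
  refine ⟨of fun i j => x j i, ?_⟩
  ext i j
  simpa [mul_apply, mul_comm] using (congrFun (hx j) i).symm

end Matrix

theorem stmt4_general (m n g : ℕ) (E : Matrix (Fin m) (Fin n) ℚ) (hrank : E.rank = g)
    (f₁ f₂ : Fin g → Fin n)
    (h₁ : ((Eᵀ * E).submatrix f₁ f₁).det ≠ 0) (h₂ : ((Eᵀ * E).submatrix f₂ f₂).det ≠ 0) :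
    ∃ X : Matrix (Fin g) (Fin g) ℚ, X.det ≠ 0 ∧
      (Eᵀ * E).submatrix f₂ f₂ = Xᵀ * ((Eᵀ * E).submatrix f₁ f₁) * X := by
  simp only [transpose_mul_self_submatrix] at h₁ h₂ ⊢
  set B₁ := E.submatrix id f₁
  set B₂ := E.submatrix id f₂
  have hB₁ : B₁.rank = E.rank := by
    rw [rank_eq_card_of_isUnit_mul ((isUnit_iff_isUnit_det _).2 h₁.isUnit), hrank,
      Fintype.card_fin]
  have hspan := span_col_submatrix_eq_of_rank_eq hB₁
  obtain ⟨X, hX⟩ : ∃ X : Matrix (Fin g) (Fin g) ℚ, B₂ = B₁ * X :=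
    exists_mul_eq_of_col_mem_span fun j => hspan ▸ Submodule.subset_span ⟨f₂ j, rfl⟩
  have hcong : B₂ᵀ * B₂ = Xᵀ * (B₁ᵀ * B₁) * X := by
    rw [hX, transpose_mul]
    simp only [Matrix.mul_assoc]
  refine ⟨X, fun hdet => h₂ ?_, hcong⟩
  rw [hcong, det_mul, hdet, mul_zero]

theorem stmt4 (m n g : ℕ) (E : Matrix (Fin m) (Fin n) ℚ) (hrank : E.rank = g)
    (f₁ f₂ : Fin g → Fin n) (hf₁ : Function.Injective f₁) (hf₂ : Function.Injective f₂)
    (h₁ : ((Eᵀ * E).submatrix f₁ f₁).det ≠ 0) (h₂ : ((Eᵀ * E).submatrix f₂ f₂).det ≠ 0) :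
    ∃ X : Matrix (Fin g) (Fin g) ℚ, X.det ≠ 0 ∧
      (Eᵀ * E).submatrix f₂ f₂ = Xᵀ * ((Eᵀ * E).submatrix f₁ f₁) * X :=
  stmt4_general m n g E hrank f₁ f₂ h₁ h₂
end

section
/- For every prime p and every integer n ≥ 1, the product ∏_{1 < i < j ≤ n} (i(i−1), j(j−1))_p of Hilbert symbols equals (−1, n)_p. -/
/-- The `p`-adic Hilbert symbol: `1` if `a x² + b y² = z²` has a nontrivial solution
over `ℚ_[p]`, and `-1` otherwise. -/
noncomputable def hilbertSym (p : ℕ) [Fact p.Prime] (a b : ℚ) : ℤ :=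
  letI := Classical.propDecidable
    (∃ x y z : ℚ_[p], ¬(x = 0 ∧ y = 0 ∧ z = 0) ∧ (a : ℚ_[p]) * x ^ 2 + (b : ℚ_[p]) * y ^ 2 = z ^ 2)
  if ∃ x y z : ℚ_[p], ¬(x = 0 ∧ y = 0 ∧ z = 0) ∧ (a : ℚ_[p]) * x ^ 2 + (b : ℚ_[p]) * y ^ 2 = z ^ 2
  then 1 else -1

/-!
The Hilbert symbol `(a, b)_p` is `1` exactly when `b` is a norm `z² - a x²` from `ℚ_[p](√a)`.
These norms form a subgroup of index at most two in `ℚ_[p]ˣ`; this is checked on generators of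
`ℚ_[p]ˣ` modulo squares: `p` and the units for odd `p` (Chevalley–Warning over `ZMod p` and
Hensel's lemma), and `-1, 5, 2` for `p = 2` (explicit norms, using that units `≡ 1 mod 8` are
squares). Hence the symbol is bimultiplicative. As `∏_{1<i<j} i(i-1) = (j-1)·((j-2)!)²`, column
`j` of the product is `(j-1, j(j-1))`, which the relations `(x, -x) = (x, 1-x) = 1` turn into
`(-1, j-1)(-1, j)`; the product over `j` telescopes to `(-1, n)`.
-/

section NormForm

variable {K : Type*} [Field K]

/-- The values of the norm form `z² - a x²`, i.e. the norms from `K(√a)`. -/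
def normSubmonoid (a : K) : Submonoid K where
  carrier := {b | ∃ z x : K, z ^ 2 - a * x ^ 2 = b}
  mul_mem' := by
    rintro _ _ ⟨z, x, rfl⟩ ⟨w, y, rfl⟩
    exact ⟨z * w + a * x * y, z * y + x * w, by ring⟩
  one_mem' := ⟨1, 0, by ring⟩

theorem zero_mem_normSubmonoid (a : K) : 0 ∈ normSubmonoid a := ⟨0, 0, by ring⟩

theorem neg_mem_normSubmonoid (a : K) : -a ∈ normSubmonoid a := ⟨0, 1, by ring⟩

theorem one_sub_mem_normSubmonoid (a : K) : 1 - a ∈ normSubmonoid a := ⟨1, 1, by ring⟩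

theorem inv_mem_normSubmonoid {a b : K} (hb : b ∈ normSubmonoid a) : b⁻¹ ∈ normSubmonoid a := by
  obtain ⟨z, x, rfl⟩ := hb
  refine ⟨z / (z ^ 2 - a * x ^ 2), x / (z ^ 2 - a * x ^ 2), ?_⟩
  rw [div_pow, div_pow, mul_div_assoc', div_sub_div_same, sq (z ^ 2 - a * x ^ 2),
    div_self_mul_self']

theorem mem_normSubmonoid_of_mul_mem {a b c : K} (hb0 : b ≠ 0) (hb : b ∈ normSubmonoid a)
    (hbc : b * c ∈ normSubmonoid a) : c ∈ normSubmonoid a := by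
  simpa [hb0] using mul_mem (inv_mem_normSubmonoid hb) hbc

theorem mem_normSubmonoid_of_isSquare (a : K) {b : K} (h : IsSquare b) :
    b ∈ normSubmonoid a := by
  obtain ⟨s, rfl⟩ := h
  exact ⟨s, 0, by ring⟩

theorem mem_normSubmonoid_of_isSquare_mul {a c m : K} (hm : IsSquare m) (hm0 : m ≠ 0)
    (h : m * c ∈ normSubmonoid a) : c ∈ normSubmonoid a :=
  mem_normSubmonoid_of_mul_mem hm0 (mem_normSubmonoid_of_isSquare a hm) h

theorem normSubmonoid_sq_mul {a s : K} (hs : s ≠ 0) :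
    normSubmonoid (s ^ 2 * a) = normSubmonoid a := by
  ext b
  constructor
  · rintro ⟨z, x, rfl⟩
    exact ⟨z, s * x, by ring⟩
  · rintro ⟨z, x, rfl⟩
    exact ⟨z, x / s, by field_simp⟩

theorem normSubmonoid_eq_top_of_isSquare [NeZero (2 : K)] {a : K} (ha : a ≠ 0)
    (h : IsSquare a) : normSubmonoid a = ⊤ := by
  obtain ⟨s, rfl⟩ := h
  have hs : s ≠ 0 := by rintro rfl; simp at ha
  refine eq_top_iff.mpr fun b _ => ⟨(b + 1) / 2, (b - 1) / (2 * s), ?_⟩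
  field_simp
  ring

theorem exists_nontrivial_add_eq_sq_iff_mem_normSubmonoid [NeZero (2 : K)] {a : K} (ha : a ≠ 0)
    (b : K) :
    (∃ x y z : K, ¬(x = 0 ∧ y = 0 ∧ z = 0) ∧ a * x ^ 2 + b * y ^ 2 = z ^ 2) ↔
      b ∈ normSubmonoid a := by
  constructor
  · rintro ⟨x, y, z, hxyz, h⟩
    rcases eq_or_ne y 0 with rfl | hy
    · have hx : x ≠ 0 := by
        rintro rfl
        exact hxyz ⟨rfl, rfl, by simpa using h.symm⟩
      rw [normSubmonoid_eq_top_of_isSquare ha ⟨z / x, by field_simp; linear_combination h⟩]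
      trivial
    · refine ⟨z / y, x / y, ?_⟩
      rw [div_pow, div_pow, mul_div_assoc', div_sub_div_same, div_eq_iff (pow_ne_zero 2 hy)]
      linear_combination -h
  · rintro ⟨z, x, rfl⟩
    exact ⟨x, 1, z, by simp, by ring⟩

theorem mul_mem_normSubmonoid_iff {a t b c : K} (ht : t ≠ 0)
    (hcover : ∀ b, b ∈ normSubmonoid a ∨ t * b ∈ normSubmonoid a) (hb : b ≠ 0) (hc : c ≠ 0) :
    b * c ∈ normSubmonoid a ↔ (b ∈ normSubmonoid a ↔ c ∈ normSubmonoid a) := by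
  by_cases hbN : b ∈ normSubmonoid a
  · exact ⟨fun h => iff_of_true hbN (mem_normSubmonoid_of_mul_mem hb hbN h),
      fun h => mul_mem hbN (h.mp hbN)⟩
  by_cases hcN : c ∈ normSubmonoid a
  · exact ⟨fun h => absurd (mem_normSubmonoid_of_mul_mem hc hcN (by rwa [mul_comm])) hbN,
      fun h => absurd (h.mpr hcN) hbN⟩
  refine iff_of_true ?_ (iff_of_false hbN hcN)
  have htb := (hcover b).resolve_left hbN
  have htc := (hcover c).resolve_left hcN
  refine mem_normSubmonoid_of_isSquare_mul ⟨t, rfl⟩ (mul_ne_zero ht ht) ?_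
  convert mul_mem htb htc using 1
  ring

theorem forall_mem_or_mul_mem_normSubmonoid {a t : K} {S : Set K} (ht : t ≠ 0)
    (hS : ∀ g ∈ S, g ∈ normSubmonoid a ∨ t * g ∈ normSubmonoid a)
    (hgen : ∀ b ≠ 0, ∃ s, ∃ g ∈ Submonoid.closure S, b = s ^ 2 * g) (b : K) :
    b ∈ normSubmonoid a ∨ t * b ∈ normSubmonoid a := by
  rcases eq_or_ne b 0 with rfl | hb
  · exact .inl (zero_mem_normSubmonoid a)
  obtain ⟨s, g, hg, rfl⟩ := hgen b hb
  clear hb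
  have hsq := mem_normSubmonoid_of_isSquare a (IsSquare.sq s)
  suffices g ∈ normSubmonoid a ∨ t * g ∈ normSubmonoid a by
    refine this.imp (mul_mem hsq) fun h => ?_
    rw [mul_left_comm]
    exact mul_mem hsq h
  induction hg using Submonoid.closure_induction with
  | mem g hg => exact hS g hg
  | one => exact .inl (one_mem _)
  | mul x y _ _ hx hy =>
    rcases hx with hx | hx <;> rcases hy with hy | hy
    · exact .inl (mul_mem hx hy)
    · exact .inr (by rw [mul_left_comm]; exact mul_mem hx hy)
    · exact .inr (by rw [← mul_assoc]; exact mul_mem hx hy)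
    · refine .inl (mem_normSubmonoid_of_isSquare_mul ⟨t, rfl⟩ (mul_ne_zero ht ht) ?_)
      convert mul_mem hx hy using 1
      ring

end NormForm

namespace PadicInt

variable {p : ℕ} [Fact p.Prime]

theorem toZMod_eq_zero_iff_norm_lt_one {x : ℤ_[p]} : toZMod x = 0 ↔ ‖x‖ < 1 := by
  rw [← RingHom.mem_ker, ker_toZMod, IsLocalRing.mem_maximalIdeal, mem_nonunits]

theorem isUnit_iff_toZMod_ne_zero {x : ℤ_[p]} : IsUnit x ↔ toZMod x ≠ 0 := by
  rw [isUnit_iff, ne_eq, toZMod_eq_zero_iff_norm_lt_one, not_lt]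
  exact ⟨fun h => h.ge, fun h => le_antisymm (norm_le_one x) h⟩

open Polynomial in
theorem isSquare_of_norm_sq_sub_lt {c a₀ : ℤ_[p]} (h : ‖a₀ ^ 2 - c‖ < ‖2 * a₀‖ ^ 2) :
    IsSquare c := by
  obtain ⟨z, hz, -⟩ := hensels_lemma (F := X ^ 2 - C c) (a := a₀)
    (by simpa [derivative_X_pow, one_add_one_eq_two] using h)
  exact ⟨z, by simpa [sub_eq_zero, sq, eq_comm] using hz⟩

theorem isSquare_coe {x : ℤ_[p]} (h : IsSquare x) : IsSquare (x : ℚ_[p]) := by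
  obtain ⟨r, rfl⟩ := h
  exact ⟨r, coe_mul r r⟩

theorem isSquare_of_isSquare_toZMod (hp : p ≠ 2) {c : ℤ_[p]} (hc : IsUnit c)
    (h : IsSquare (toZMod c)) : IsSquare c := by
  obtain ⟨t, ht⟩ := h
  obtain ⟨a₀, rfl⟩ := ZMod.ringHom_surjective toZMod t
  refine isSquare_of_norm_sq_sub_lt (a₀ := a₀) ?_
  have h2 : IsUnit (2 * a₀) := by
    rw [isUnit_iff_toZMod_ne_zero, map_mul, map_ofNat]
    refine mul_ne_zero (Ring.two_ne_zero (by rwa [ZMod.ringChar_zmod_n])) fun h0 => ?_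
    rw [isUnit_iff_toZMod_ne_zero, ht, h0, mul_zero] at hc
    exact hc rfl
  rw [isUnit_iff.mp h2, one_pow, ← toZMod_eq_zero_iff_norm_lt_one, map_sub, map_pow, ht, sq,
    sub_self]

theorem isSquare_or_isSquare_mul (hp : p ≠ 2) {ρ u : ℤ_[p]} (hρ : ¬IsSquare (toZMod ρ))
    (hu : IsUnit u) : IsSquare u ∨ IsSquare (ρ * u) := by
  by_cases hsq : IsSquare (toZMod u)
  · exact .inl (isSquare_of_isSquare_toZMod hp hu hsq)
  have hρ0 : toZMod ρ ≠ 0 := fun h => hρ (h ▸ IsSquare.zero)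
  have hu0 := isUnit_iff_toZMod_ne_zero.mp hu
  have hρu : toZMod (ρ * u) ≠ 0 := by rw [map_mul]; exact mul_ne_zero hρ0 hu0
  refine .inr (isSquare_of_isSquare_toZMod hp (isUnit_iff_toZMod_ne_zero.mpr hρu) ?_)
  rw [← quadraticChar_one_iff_isSquare hρu, map_mul, map_mul,
    quadraticChar_neg_one_iff_not_isSquare.mpr hρ, quadraticChar_neg_one_iff_not_isSquare.mpr hsq]
  norm_num

open Polynomial in
/-- Solve over `ZMod p` (Chevalley–Warning for two quadrics), then lift by Hensel's lemma
whichever of the two coordinates is a unit. -/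
theorem exists_sq_sub_mul_sq_eq (hp : p ≠ 2) {u w : ℤ_[p]} (hu : IsUnit u) (hw : IsUnit w) :
    ∃ z x : ℤ_[p], z ^ 2 - u * x ^ 2 = w := by
  have hU := isUnit_iff_toZMod_ne_zero.mp hu
  have hcard : Fintype.card (ZMod p) % 2 = 1 := by
    rw [ZMod.card]
    exact Nat.odd_iff.mp ((Fact.out : p.Prime).odd_of_ne_two hp)
  obtain ⟨z₀, x₀, h₀⟩ := FiniteField.exists_root_sum_quadratic (f := X ^ 2)
    (g := C (-toZMod u) * X ^ 2 + C 0 * X + C (-toZMod w)) (degree_X_pow 2)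
    (degree_quadratic (neg_ne_zero.mpr hU)) hcard
  obtain ⟨z, rfl⟩ := ZMod.ringHom_surjective toZMod z₀
  obtain ⟨x, rfl⟩ := ZMod.ringHom_surjective toZMod x₀
  simp only [eval_add, eval_pow, eval_X, eval_mul, eval_C] at h₀
  replace h₀ : toZMod z ^ 2 - toZMod u * toZMod x ^ 2 = toZMod w := by linear_combination h₀
  rcases eq_or_ne (toZMod z) 0 with hz | hz
  · obtain ⟨v, huv⟩ := hu.exists_right_inv
    have huv' : toZMod u * toZMod v = 1 := by rw [← map_mul, huv, map_one]
    have hres : toZMod (-w * v) = toZMod x * toZMod x := by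
      rw [map_mul, map_neg, ← h₀, hz]
      linear_combination (toZMod x) ^ 2 * huv'
    have hunit : IsUnit (-w * v) := hw.neg.mul (IsUnit.of_mul_eq_one_right u huv)
    obtain ⟨d, hd⟩ := isSquare_of_isSquare_toZMod hp hunit ⟨_, hres⟩
    exact ⟨0, d, by linear_combination u * hd + w * huv⟩
  · have hres : toZMod (u * x ^ 2 + w) = toZMod z * toZMod z := by
      rw [map_add, map_mul, map_pow, ← h₀]
      ring
    have hunit : IsUnit (u * x ^ 2 + w) := by
      rw [isUnit_iff_toZMod_ne_zero, hres]
      exact mul_ne_zero hz hz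
    obtain ⟨d, hd⟩ := isSquare_of_isSquare_toZMod hp hunit ⟨_, hres⟩
    exact ⟨d, x, by linear_combination -hd⟩

theorem isSquare_of_toZModPow_three_eq_one {c : ℤ_[2]} (hc : toZModPow 3 c = 1) :
    IsSquare c := by
  refine isSquare_of_norm_sq_sub_lt (a₀ := 1) ?_
  have hker : (1 : ℤ_[2]) ^ 2 - c ∈ RingHom.ker (toZModPow 3 : ℤ_[2] →+* ZMod (2 ^ 3)) := by
    rw [RingHom.mem_ker, map_sub, map_pow, map_one, hc]
    ring
  rw [ker_toZModPow, ← norm_le_pow_iff_mem_span_pow] at hker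
  rw [mul_one, show (2 : ℤ_[2]) = ((2 : ℕ) : ℤ_[2]) by norm_num, norm_p]
  calc _ ≤ _ := hker
    _ < _ := by norm_num

theorem exists_isSquare_mul_of_isUnit {u : ℤ_[2]} (hu : IsUnit u) :
    ∃ r ∈ ({1, -1, 5, -5} : Finset ℤ), IsSquare (r * u) := by
  obtain ⟨v, huv⟩ := hu.exists_right_inv
  have key : ∀ R V : ZMod (2 ^ 3), R * V = 1 →
      ∃ r ∈ ({1, -1, 5, -5} : Finset ℤ), (r : ZMod (2 ^ 3)) * R = 1 := by
    decide
  obtain ⟨r, hr, hrR⟩ := key (toZModPow 3 u) (toZModPow 3 v) (by rw [← map_mul, huv, map_one])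
  exact ⟨r, hr, isSquare_of_toZModPow_three_eq_one (by rwa [map_mul, map_intCast])⟩

end PadicInt

namespace Padic

variable {p : ℕ} [Fact p.Prime]

theorem exists_eq_sq_mul_pow_mul_unit {x : ℚ_[p]} (hx : x ≠ 0) :
    ∃ (s : ℚ_[p]) (k : ℕ) (u : ℤ_[p]ˣ), k < 2 ∧
      x = s ^ 2 * (p ^ k * ((u : ℤ_[p]) : ℚ_[p])) := by
  have hp0 : (p : ℚ_[p]) ≠ 0 := by exact_mod_cast (Fact.out : p.Prime).ne_zero
  set v := x.valuation
  have hy : ‖(p : ℚ_[p]) ^ (-v) * x‖ = 1 := by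
    rw [norm_mul, norm_p_zpow, norm_eq_zpow_neg_valuation hx, neg_neg, ← zpow_add₀,
      add_neg_cancel, zpow_zero]
    exact_mod_cast (Fact.out : p.Prime).ne_zero
  let y : ℤ_[p] := ⟨(p : ℚ_[p]) ^ (-v) * x, hy.le⟩
  let u : ℤ_[p]ˣ := (PadicInt.isUnit_iff (z := y) |>.mpr hy).unit
  have hx' : x = p ^ v * ((u : ℤ_[p]) : ℚ_[p]) := by
    change x = p ^ v * (p ^ (-v) * x)
    rw [← mul_assoc, ← zpow_add₀ hp0, add_neg_cancel, zpow_zero, one_mul]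
  obtain ⟨m, hm | hm⟩ := Int.even_or_odd' v
  · refine ⟨p ^ m, 0, u, by norm_num, ?_⟩
    rw [hx', hm, mul_comm 2 m, zpow_mul, zpow_two, pow_zero, one_mul, sq]
  · refine ⟨p ^ m, 1, u, by norm_num, ?_⟩
    rw [hx', hm, zpow_add_one₀ hp0, mul_comm 2 m, zpow_mul, zpow_two, pow_one, sq, mul_assoc]

theorem exists_eq_sq_mul_mem_closure {x : ℚ_[p]} (hx : x ≠ 0) :
    ∃ s, ∃ g ∈ Submonoid.closure
      (insert (p : ℚ_[p]) (Set.range fun u : ℤ_[p]ˣ => ((u : ℤ_[p]) : ℚ_[p]))), x = s ^ 2 * g := by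
  obtain ⟨s, k, u, -, rfl⟩ := exists_eq_sq_mul_pow_mul_unit hx
  refine ⟨s, _, mul_mem (pow_mem (Submonoid.subset_closure (.inl rfl)) k)
    (Submonoid.subset_closure (.inr ⟨u, rfl⟩)), rfl⟩

theorem exists_ne_zero_forall_isSquare_or_isSquare_mul (hp : p ≠ 2) :
    ∃ ρ : ℚ_[p], ρ ≠ 0 ∧
      ∀ w : ℤ_[p]ˣ, IsSquare ((w : ℤ_[p]) : ℚ_[p]) ∨ IsSquare (ρ * (w : ℤ_[p])) := by
  obtain ⟨ρ₀, hρ₀⟩ := FiniteField.exists_nonsquare (F := ZMod p) (by rwa [ZMod.ringChar_zmod_n])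
  obtain ⟨ρ, rfl⟩ := ZMod.ringHom_surjective PadicInt.toZMod ρ₀
  refine ⟨ρ, fun h => hρ₀ ?_, fun w => ?_⟩
  · rw [PadicInt.coe_eq_zero.mp h, map_zero]
    exact IsSquare.zero
  · simpa using (PadicInt.isSquare_or_isSquare_mul hp hρ₀ w.isUnit).imp
      PadicInt.isSquare_coe PadicInt.isSquare_coe

theorem exists_forall_mem_or_mul_mem_normSubmonoid_of_ne_two (hp : p ≠ 2) {a : ℚ_[p]}
    (ha : a ≠ 0) : ∃ t ≠ 0, ∀ b, b ∈ normSubmonoid a ∨ t * b ∈ normSubmonoid a := by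
  have hp0 : (p : ℚ_[p]) ≠ 0 := by exact_mod_cast (Fact.out : p.Prime).ne_zero
  obtain ⟨σ, k, u, hk, rfl⟩ := exists_eq_sq_mul_pow_mul_unit ha
  rw [normSubmonoid_sq_mul ((pow_ne_zero_iff two_ne_zero).mp (left_ne_zero_of_mul ha))]
  interval_cases k
  · -- `a` is a unit, and units are norms
    refine ⟨p, hp0, forall_mem_or_mul_mem_normSubmonoid hp0 ?_
      fun _ => exists_eq_sq_mul_mem_closure⟩
    rintro _ (rfl | ⟨w, rfl⟩)
    · exact .inr (mem_normSubmonoid_of_isSquare _ ⟨p, rfl⟩)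
    · obtain ⟨z, x, h⟩ := PadicInt.exists_sq_sub_mul_sq_eq hp u.isUnit w.isUnit
      exact .inl ⟨z, x, by simpa using congrArg ((↑) : ℤ_[p] → ℚ_[p]) h⟩
  · -- `a = p u`: then `-a` is a norm and `-u` is a square or `ρ` times a square
    obtain ⟨ρ, hρ, hclass⟩ := exists_ne_zero_forall_isSquare_or_isSquare_mul hp
    refine ⟨ρ, hρ, forall_mem_or_mul_mem_normSubmonoid hρ ?_
      fun _ => exists_eq_sq_mul_mem_closure⟩
    have hneg := neg_mem_normSubmonoid ((p : ℚ_[p]) ^ 1 * (u : ℤ_[p]))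
    rintro _ (rfl | ⟨w, rfl⟩)
    · rcases hclass (-u) with hsq | hsq
      · refine .inl (mem_normSubmonoid_of_isSquare_mul hsq (by simp) ?_)
        convert hneg using 1
        push_cast
        ring
      · refine .inr (mem_normSubmonoid_of_isSquare_mul hsq (by simp [hρ]) ?_)
        convert mul_mem (mem_normSubmonoid_of_isSquare _ (IsSquare.mul_self ρ)) hneg using 1
        push_cast
        ring
    · exact (hclass w).imp (mem_normSubmonoid_of_isSquare _) (mem_normSubmonoid_of_isSquare _)

theorem exists_eq_sq_mul_two_pow_mul {x : ℚ_[2]} (hx : x ≠ 0) :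
    ∃ s : ℚ_[2], ∃ k < 2, ∃ r ∈ ({1, -1, 5, -5} : Set ℚ_[2]), x = s ^ 2 * (2 ^ k * r) := by
  obtain ⟨s, k, u, hk, rfl⟩ := exists_eq_sq_mul_pow_mul_unit hx
  obtain ⟨r, hr, c, hc⟩ := PadicInt.exists_isSquare_mul_of_isUnit u.isUnit
  have hr' : (r : ℚ_[2]) ∈ ({1, -1, 5, -5} : Set ℚ_[2]) := by
    simp only [Finset.mem_insert, Finset.mem_singleton] at hr
    rcases hr with rfl | rfl | rfl | rfl <;> simp
  have hr0 : (r : ℚ_[2]) ≠ 0 := by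
    rintro h
    norm_num [h] at hr'
  have hc' : (r : ℚ_[2]) * (u : ℤ_[2]) = c * c := by
    exact_mod_cast congrArg ((↑) : ℤ_[2] → ℚ_[2]) hc
  refine ⟨s * c / r, k, hk, r, hr', ?_⟩
  rw [div_pow, mul_pow, sq (c : ℚ_[2]), ← hc']
  field_simp
  push_cast
  ring

theorem exists_eq_sq_mul_mem_closure_two {x : ℚ_[2]} (hx : x ≠ 0) :
    ∃ s, ∃ g ∈ Submonoid.closure ({-1, 5, 2} : Set ℚ_[2]), x = s ^ 2 * g := by
  obtain ⟨s, k, -, r, hr, rfl⟩ := exists_eq_sq_mul_two_pow_mul hx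
  have hmem (g : ℚ_[2]) (hg : g ∈ ({-1, 5, 2} : Set ℚ_[2])) := Submonoid.subset_closure hg
  refine ⟨s, _, mul_mem (pow_mem (hmem 2 (by simp)) k) ?_, rfl⟩
  rcases hr with rfl | rfl | rfl | rfl
  · exact one_mem _
  · exact hmem _ (by simp)
  · exact hmem _ (by simp)
  · simpa using mul_mem (hmem (-1) (by simp)) (hmem 5 (by simp))

theorem isSquare_intCast_two {m : ℤ} (hm : (m : ZMod (2 ^ 3)) = 1) : IsSquare (m : ℚ_[2]) := by
  simpa using PadicInt.isSquare_coe (PadicInt.isSquare_of_toZModPow_three_eq_one (c := m)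
    (by rwa [map_intCast]))

theorem exists_forall_mem_or_mul_mem_normSubmonoid_two_of_gens {a t : ℚ_[2]} (ht : t ≠ 0)
    (h₁ : -1 ∈ normSubmonoid a ∨ t * -1 ∈ normSubmonoid a)
    (h₅ : 5 ∈ normSubmonoid a ∨ t * 5 ∈ normSubmonoid a)
    (h₂ : 2 ∈ normSubmonoid a ∨ t * 2 ∈ normSubmonoid a) :
    ∃ t ≠ 0, ∀ b, b ∈ normSubmonoid a ∨ t * b ∈ normSubmonoid a :=
  ⟨t, ht, forall_mem_or_mul_mem_normSubmonoid ht (by rintro _ (rfl | rfl | rfl) <;> assumption)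
    fun _ => exists_eq_sq_mul_mem_closure_two⟩

/-- Witnesses on the classes `±1, ±5, ±2, ±10` of `ℚ₂ˣ / ℚ₂ˣ²`; the ones that are not
identities in `ℚ` use that `-7` and `-15` are `2`-adic squares. -/
theorem exists_forall_mem_or_mul_mem_normSubmonoid_two {a : ℚ_[2]} (ha : a ≠ 0) :
    ∃ t ≠ 0, ∀ b, b ∈ normSubmonoid a ∨ t * b ∈ normSubmonoid a := by
  obtain ⟨σ, k, hk, r, hr, rfl⟩ := exists_eq_sq_mul_two_pow_mul ha
  rw [normSubmonoid_sq_mul ((pow_ne_zero_iff two_ne_zero).mp (left_ne_zero_of_mul ha))]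
  have h₇ : IsSquare (-7 : ℚ_[2]) := by simpa using isSquare_intCast_two (m := -7) (by decide)
  have h₁₅ : IsSquare (-15 : ℚ_[2]) := by simpa using isSquare_intCast_two (m := -15) (by decide)
  interval_cases k <;> rcases hr with rfl | rfl | rfl | rfl
  · exact exists_forall_mem_or_mul_mem_normSubmonoid_two_of_gens one_ne_zero
      (.inl ⟨0, 1, by norm_num⟩) (.inl ⟨3, 2, by norm_num⟩) (.inl ⟨3 / 2, 1 / 2, by norm_num⟩)
  · exact exists_forall_mem_or_mul_mem_normSubmonoid_two_of_gens (t := -1) (by norm_num)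
      (.inr ⟨1, 0, by norm_num⟩) (.inl ⟨1, 2, by norm_num⟩) (.inl ⟨1, 1, by norm_num⟩)
  · exact exists_forall_mem_or_mul_mem_normSubmonoid_two_of_gens (t := 2) (by norm_num)
      (.inl ⟨2, 1, by norm_num⟩) (.inl ⟨5, 2, by norm_num⟩) (.inr ⟨2, 0, by norm_num⟩)
  · exact exists_forall_mem_or_mul_mem_normSubmonoid_two_of_gens (t := -1) (by norm_num)
      (.inr ⟨1, 0, by norm_num⟩) (.inl ⟨0, 1, by norm_num⟩)
      (.inr (mem_normSubmonoid_of_isSquare_mul h₇ (by norm_num) ⟨3, 1, by norm_num⟩))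
  · exact exists_forall_mem_or_mul_mem_normSubmonoid_two_of_gens (t := 5) (by norm_num)
      (.inl ⟨1, 1, by norm_num⟩) (.inr ⟨5, 0, by norm_num⟩) (.inl ⟨2, 1, by norm_num⟩)
  · exact exists_forall_mem_or_mul_mem_normSubmonoid_two_of_gens (t := -1) (by norm_num)
      (.inr ⟨1, 0, by norm_num⟩)
      (.inr (mem_normSubmonoid_of_isSquare_mul h₁₅ (by norm_num) ⟨5, 5, by norm_num⟩))
      (.inl ⟨0, 1, by norm_num⟩)
  · exact exists_forall_mem_or_mul_mem_normSubmonoid_two_of_gens (t := 5) (by norm_num)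
      (.inl ⟨3, 1, by norm_num⟩) (.inr ⟨5, 0, by norm_num⟩) (.inr ⟨10, 3, by norm_num⟩)
  · exact exists_forall_mem_or_mul_mem_normSubmonoid_two_of_gens (t := -1) (by norm_num)
      (.inr ⟨1, 0, by norm_num⟩)
      (.inr (mem_normSubmonoid_of_isSquare_mul h₇ (by norm_num) ⟨5, 1, by norm_num⟩))
      (.inr (mem_normSubmonoid_of_isSquare_mul h₇ (by norm_num) ⟨2, 1, by norm_num⟩))

variable {p : ℕ} [Fact p.Prime]

/-- The norms from `ℚ_[p](√a)` have index at most two in `ℚ_[p]ˣ`. -/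
theorem exists_forall_mem_or_mul_mem_normSubmonoid {a : ℚ_[p]} (ha : a ≠ 0) :
    ∃ t ≠ 0, ∀ b, b ∈ normSubmonoid a ∨ t * b ∈ normSubmonoid a := by
  rcases eq_or_ne p 2 with rfl | hp
  · exact exists_forall_mem_or_mul_mem_normSubmonoid_two ha
  · exact exists_forall_mem_or_mul_mem_normSubmonoid_of_ne_two hp ha

end Padic

section HilbertSymbol

variable {p : ℕ} [Fact p.Prime]

open Classical in
theorem hilbertSym_eq_ite {a : ℚ} (ha : a ≠ 0) (b : ℚ) :
    hilbertSym p a b = if (b : ℚ_[p]) ∈ normSubmonoid (a : ℚ_[p]) then 1 else -1 := by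
  unfold hilbertSym
  exact if_congr (exists_nontrivial_add_eq_sq_iff_mem_normSubmonoid (by exact_mod_cast ha) _)
    rfl rfl

theorem hilbertSym_comm (a b : ℚ) : hilbertSym p a b = hilbertSym p b a := by
  unfold hilbertSym
  congr 1
  refine propext ⟨?_, ?_⟩ <;> rintro ⟨x, y, z, hxyz, h⟩ <;>
    exact ⟨y, x, z, by tauto, by linear_combination h⟩

theorem hilbertSym_mul_self (a b : ℚ) : hilbertSym p a b * hilbertSym p a b = 1 := by
  unfold hilbertSym
  split_ifs <;> norm_num

theorem hilbertSym_eq_one_of_mem {a b : ℚ} (ha : a ≠ 0)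
    (h : (b : ℚ_[p]) ∈ normSubmonoid (a : ℚ_[p])) : hilbertSym p a b = 1 := by
  rw [hilbertSym_eq_ite ha, if_pos h]

theorem hilbertSym_one_right {a : ℚ} (ha : a ≠ 0) : hilbertSym p a 1 = 1 :=
  hilbertSym_eq_one_of_mem ha (by rw [Rat.cast_one]; exact one_mem _)

theorem hilbertSym_neg_self {a : ℚ} (ha : a ≠ 0) : hilbertSym p a (-a) = 1 :=
  hilbertSym_eq_one_of_mem ha (by simpa using neg_mem_normSubmonoid _)

theorem hilbertSym_one_sub {a : ℚ} (ha : a ≠ 0) : hilbertSym p a (1 - a) = 1 :=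
  hilbertSym_eq_one_of_mem ha (by simpa using one_sub_mem_normSubmonoid _)

theorem hilbertSym_mul_right {a b c : ℚ} (ha : a ≠ 0) (hb : b ≠ 0) (hc : c ≠ 0) :
    hilbertSym p a (b * c) = hilbertSym p a b * hilbertSym p a c := by
  obtain ⟨t, ht, hcover⟩ := Padic.exists_forall_mem_or_mul_mem_normSubmonoid
    (p := p) (Rat.cast_ne_zero.mpr ha)
  have key := mul_mem_normSubmonoid_iff ht hcover (Rat.cast_ne_zero.mpr hb)
    (Rat.cast_ne_zero.mpr hc)
  simp only [hilbertSym_eq_ite ha, Rat.cast_mul]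
  split_ifs <;> simp_all

theorem hilbertSym_mul_left {a b c : ℚ} (ha : a ≠ 0) (hb : b ≠ 0) (hc : c ≠ 0) :
    hilbertSym p (a * b) c = hilbertSym p a c * hilbertSym p b c := by
  simp only [hilbertSym_comm _ c, hilbertSym_mul_right hc ha hb]

theorem hilbertSym_prod_left {ι : Type*} {s : Finset ι} {f : ι → ℚ} (hf : ∀ i ∈ s, f i ≠ 0)
    {c : ℚ} (hc : c ≠ 0) : hilbertSym p (∏ i ∈ s, f i) c = ∏ i ∈ s, hilbertSym p (f i) c := by
  classical
  induction s using Finset.induction_on with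
  | empty => rw [Finset.prod_empty, Finset.prod_empty, hilbertSym_comm, hilbertSym_one_right hc]
  | insert i s hi ih =>
    rw [Finset.prod_insert hi, Finset.prod_insert hi, hilbertSym_mul_left (hf i (by simp))
      (Finset.prod_ne_zero_iff.mpr fun j hj => hf j (by simp [hj])) hc,
      ih fun j hj => hf j (by simp [hj])]

theorem hilbertSym_sq_mul_left {a s : ℚ} (hs : s ≠ 0) (ha : a ≠ 0) (b : ℚ) :
    hilbertSym p (s ^ 2 * a) b = hilbertSym p a b := by
  rw [hilbertSym_eq_ite (by positivity), hilbertSym_eq_ite ha, Rat.cast_mul, Rat.cast_pow,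
    normSubmonoid_sq_mul (Rat.cast_ne_zero.mpr hs)]

theorem hilbertSym_self_mul_add_one {x : ℚ} (hx : x ≠ 0) (hx1 : x + 1 ≠ 0) :
    hilbertSym p x ((x + 1) * x) = hilbertSym p (-1) x * hilbertSym p (-1) (x + 1) := by
  have hneg : -x ≠ 0 := neg_ne_zero.mpr hx
  have hself : hilbertSym p x x = hilbertSym p x (-1) := by
    simpa [hilbertSym_neg_self hx] using
      hilbertSym_mul_right (p := p) (b := -1) hx (by norm_num) hneg
  have hsucc : hilbertSym p (x + 1) x = hilbertSym p (x + 1) (-1) := by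
    have h1 : hilbertSym p (x + 1) (-x) = 1 := by
      rw [hilbertSym_comm, show x + 1 = 1 - -x by ring]
      exact hilbertSym_one_sub hneg
    simpa [h1] using hilbertSym_mul_right (p := p) (b := -1) hx1 (by norm_num) hneg
  rw [hilbertSym_mul_right hx hx1 hx, hself, hilbertSym_comm x, hsucc, hilbertSym_comm x,
    hilbertSym_comm (x + 1), mul_comm]

end HilbertSymbol

theorem prod_Ico_two_mul_sub_one (m : ℕ) :
    ∏ i ∈ Finset.Ico 2 (m + 2), ((i : ℚ) * ((i : ℚ) - 1)) = (m.factorial : ℚ) ^ 2 * (m + 1) := by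
  induction m with
  | zero => simp
  | succ m ih =>
    rw [Finset.prod_Ico_succ_top (by omega), ih, Nat.factorial_succ]
    push_cast
    ring

theorem prod_hilbertSym_Ico_two {p : ℕ} [Fact p.Prime] {j : ℕ} (hj : 2 ≤ j) :
    ∏ i ∈ Finset.Ico 2 j, hilbertSym p ((i : ℚ) * ((i : ℚ) - 1)) ((j : ℚ) * ((j : ℚ) - 1)) =
      hilbertSym p (-1) ((j : ℚ) - 1) * hilbertSym p (-1) (j : ℚ) := by
  obtain ⟨m, rfl⟩ := Nat.exists_eq_add_of_le' hj
  have hm : (m : ℚ) + 1 ≠ 0 := by positivity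
  have hc : ((m + 2 : ℕ) : ℚ) * (((m + 2 : ℕ) : ℚ) - 1) = ((m + 1 : ℚ) + 1) * (m + 1) := by
    push_cast
    ring
  rw [hc, ← hilbertSym_prod_left ?_ (by positivity), prod_Ico_two_mul_sub_one,
    hilbertSym_sq_mul_left (by positivity) hm, hilbertSym_self_mul_add_one hm (by positivity)]
  · push_cast
    ring_nf
  · intro i hi
    have hi2 : (2 : ℚ) ≤ i := by exact_mod_cast (Finset.mem_Ico.mp hi).1
    exact mul_ne_zero (by positivity) (by linarith)

theorem stmt7 (p : ℕ) [Fact p.Prime] (n : ℕ) (hn : 1 ≤ n) :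
    ∏ j ∈ Finset.Icc 2 n, ∏ i ∈ Finset.Ico 2 j,
        hilbertSym p ((i : ℚ) * ((i : ℚ) - 1)) ((j : ℚ) * ((j : ℚ) - 1)) =
      hilbertSym p (-1) (n : ℚ) := by
  induction n, hn using Nat.le_induction with
  | base => simp [hilbertSym_one_right]
  | succ n hn ih =>
    rw [Finset.prod_Icc_succ_top (by omega), ih, prod_hilbertSym_Ico_two (by omega)]
    push_cast
    rw [add_sub_cancel_right, ← mul_assoc, hilbertSym_mul_self, one_mul]
end

section
/- A positive integer n is a sum of two integer squares if and only if the Hilbert symbol (−1, n)_p equals 1 for every prime p. -/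
namespace PadicInt

variable {p : ℕ} [Fact p.Prime]

theorem isUnit_one_add_sq (hp : p % 4 = 3) (t : ℤ_[p]) : IsUnit (1 + t ^ 2) := by
  by_contra h
  have hker : 1 + t ^ 2 ∈ RingHom.ker toZMod := by
    rw [ker_toZMod, IsLocalRing.mem_maximalIdeal]
    exact h
  have hsq : toZMod t ^ 2 = -1 := by
    rw [RingHom.mem_ker, map_add, map_one, map_pow] at hker
    linear_combination hker
  exact ZMod.mod_four_ne_three_of_sq_eq_neg_one hsq hp

theorem valuation_coe_of_isUnit {u : ℤ_[p]} (hu : IsUnit u) : (u : ℚ_[p]).valuation = 0 := by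
  obtain ⟨v, hv⟩ := hu.exists_right_inv
  have h := congrArg valuation hv
  rw [valuation_mul hu.ne_zero (right_ne_zero_of_mul_eq_one hv), valuation_one] at h
  simp only [valuation_coe]
  omega

end PadicInt

namespace Padic

variable {p : ℕ} [Fact p.Prime]

theorem not_isSquare_neg_one (hp : p % 4 = 3) : ¬IsSquare (-1 : ℚ_[p]) := by
  rintro ⟨u, hu⟩
  have hnorm : ‖u‖ = 1 := by
    have h := congrArg norm hu
    rw [norm_neg, norm_one, norm_mul] at h
    nlinarith [norm_nonneg u]
  let t : ℤ_[p] := ⟨u, hnorm.le⟩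
  have ht : (t : ℚ_[p]) = u := rfl
  apply (PadicInt.isUnit_one_add_sq hp t).ne_zero
  rw [← PadicInt.coe_eq_zero]
  push_cast
  rw [ht]
  linear_combination -hu

theorem even_valuation_sq_add_sq (hp : p % 4 = 3) {a b : ℚ_[p]} (hab : a ^ 2 + b ^ 2 ≠ 0) :
    Even (a ^ 2 + b ^ 2).valuation := by
  wlog hba : ‖b‖ ≤ ‖a‖ generalizing a b
  · rw [add_comm] at hab ⊢
    exact this hab (le_of_not_ge hba)
  have ha : a ≠ 0 := by
    rintro rfl
    rw [norm_zero, norm_le_zero_iff] at hba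
    simp [hba] at hab
  let t : ℤ_[p] := ⟨b / a, by rw [norm_div]; exact div_le_one_of_le₀ hba (norm_nonneg _)⟩
  have ht : (t : ℚ_[p]) = b / a := rfl
  have hunit := PadicInt.isUnit_one_add_sq hp t
  have hfactor : a ^ 2 + b ^ 2 = a ^ 2 * ((1 + t ^ 2 : ℤ_[p]) : ℚ_[p]) := by
    push_cast
    rw [ht]
    field_simp
  rw [hfactor, valuation_mul (pow_ne_zero 2 ha) (PadicInt.coe_ne_zero.mpr hunit.ne_zero),
    PadicInt.valuation_coe_of_isUnit hunit, valuation_pow]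
  exact ⟨a.valuation, by push_cast; ring⟩

end Padic

theorem hilbertSym_eq_one_iff (p : ℕ) [Fact p.Prime] (a b : ℚ) :
    hilbertSym p a b = 1 ↔ ∃ x y z : ℚ_[p], ¬(x = 0 ∧ y = 0 ∧ z = 0) ∧
      (a : ℚ_[p]) * x ^ 2 + (b : ℚ_[p]) * y ^ 2 = z ^ 2 := by
  unfold hilbertSym
  split_ifs with h
  · exact iff_of_true rfl h
  · exact iff_of_false (by norm_num) h

theorem hilbertSym_neg_one_sq_add_sq (p : ℕ) [Fact p.Prime] (a b : ℚ) :
    hilbertSym p (-1) (a ^ 2 + b ^ 2) = 1 := by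
  rw [hilbertSym_eq_one_iff]
  refine ⟨a, 1, b, fun h => one_ne_zero h.2.1, ?_⟩
  push_cast
  ring

theorem exists_sq_add_sq_of_hilbertSym_neg_one_eq_one {p : ℕ} [Fact p.Prime]
    (hp : ¬IsSquare (-1 : ℚ_[p])) {c : ℚ} (h : hilbertSym p (-1) c = 1) :
    ∃ u v : ℚ_[p], (c : ℚ_[p]) = u ^ 2 + v ^ 2 := by
  obtain ⟨x, y, z, hxyz, heq⟩ := (hilbertSym_eq_one_iff p (-1) c).mp h
  push_cast at heq
  -- with `y = 0` the relation would read `z² = -x²`, forcing `x = z = 0` since `-1` is not a square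
  have hy : y ≠ 0 := by
    rintro rfl
    have hx : x = 0 := by
      by_contra hx
      exact hp ⟨z / x, by field_simp; linear_combination heq⟩
    subst hx
    exact hxyz ⟨rfl, rfl, pow_eq_zero_iff two_ne_zero |>.mp (by linear_combination -heq)⟩
  exact ⟨z / y, x / y, by field_simp; linear_combination heq⟩

theorem stmt10_general (n : ℕ) :
    (∃ a b : ℤ, (n : ℤ) = a ^ 2 + b ^ 2) ↔
      ∀ (p : ℕ) [Fact p.Prime], hilbertSym p (-1) (n : ℚ) = 1 := by
  constructor
  · rintro ⟨a, b, hab⟩ p _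
    have hn : (n : ℚ) = (a : ℚ) ^ 2 + (b : ℚ) ^ 2 := by exact_mod_cast hab
    rw [hn]
    exact hilbertSym_neg_one_sq_add_sq p a b
  · intro H
    suffices ∃ x y : ℕ, n = x ^ 2 + y ^ 2 by
      obtain ⟨x, y, hxy⟩ := this
      exact ⟨x, y, by exact_mod_cast hxy⟩
    refine Nat.eq_sq_add_sq_iff.mpr fun q hq hq3 => ?_
    have : Fact q.Prime := ⟨Nat.prime_of_mem_primeFactors hq⟩
    obtain ⟨u, v, huv⟩ :=
      exists_sq_add_sq_of_hilbertSym_neg_one_eq_one (Padic.not_isSquare_neg_one hq3) (H q)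
    rw [Rat.cast_natCast] at huv
    have hn : (n : ℚ_[q]) ≠ 0 := Nat.cast_ne_zero.mpr ((Nat.mem_primeFactors.mp hq).2.2)
    have heven := Padic.even_valuation_sq_add_sq hq3 (huv ▸ hn)
    rw [← huv, Padic.valuation_natCast] at heven
    exact_mod_cast heven

theorem stmt10 (n : ℕ) (hn : 0 < n) :
    (∃ a b : ℤ, (n : ℤ) = a ^ 2 + b ^ 2) ↔
      ∀ (p : ℕ) [Fact p.Prime], hilbertSym p (-1) (n : ℚ) = 1 :=
  stmt10_general n
end

section
/- Let q > 2 be an integer and d = 2. If 2q + 1 = x² for some integer x and q is a prime power, then q = 4. (Indeed x is odd, x = 2y+1 gives q = 2y(y+1), so q is even, hence a power of 2, forcing both y and y+1 to be powers of 2, so y = 1.) -/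
/-!
An odd square `x ^ 2 = 2 * q + 1` forces `q = 2 * m * (m + 1)`. The consecutive integers `m` and
`m + 1` are coprime divisors of the prime power `q`, so one of them is `1`; as `q ≠ 0`, `m = 1`.
-/

theorem IsPrimePow.eq_one_or_eq_one_of_coprime {q a b : ℕ} (hq : IsPrimePow q) (ha : a ∣ q)
    (hb : b ∣ q) (hab : a.Coprime b) : a = 1 ∨ b = 1 := by
  by_contra! h
  obtain ⟨p, -, hunique⟩ := isPrimePow_iff_unique_prime_dvd.mp hq
  have hpa := hunique _ ⟨Nat.minFac_prime h.1, (Nat.minFac_dvd a).trans ha⟩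
  have hpb := hunique _ ⟨Nat.minFac_prime h.2, (Nat.minFac_dvd b).trans hb⟩
  have hdvd : a.minFac ∣ b := hpa ▸ hpb ▸ Nat.minFac_dvd b
  exact (Nat.minFac_prime h.1).ne_one (Nat.eq_one_of_dvd_coprimes hab (Nat.minFac_dvd a) hdvd)

theorem exists_eq_two_mul_mul_succ_of_sq_eq {x : ℤ} {n : ℕ} (h : x ^ 2 = 2 * n + 1) :
    ∃ m : ℕ, n = 2 * (m * (m + 1)) := by
  have hk : x.natAbs ^ 2 = 2 * n + 1 := by
    rw [← Int.natAbs_sq] at h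
    exact_mod_cast h
  have hodd : Odd (x.natAbs ^ 2) := hk ▸ odd_two_mul_add_one n
  obtain ⟨m, hm⟩ := (Nat.odd_pow_iff two_ne_zero).mp hodd
  refine ⟨m, ?_⟩
  rw [hm] at hk
  nlinarith

theorem stmt13_general (q : ℕ) (x : ℤ) (hpp : IsPrimePow q)
    (hx : x ^ 2 = 2 * (q : ℤ) + 1) : q = 4 := by
  obtain ⟨m, rfl⟩ := exists_eq_two_mul_mul_succ_of_sq_eq hx
  have hm : m ∣ 2 * (m * (m + 1)) := ⟨2 * (m + 1), by ring⟩
  have hm₁ : m + 1 ∣ 2 * (m * (m + 1)) := ⟨2 * m, by ring⟩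
  have hcop : m.Coprime (m + 1) := Nat.coprime_self_add_right.mpr m.coprime_one_right
  rcases hpp.eq_one_or_eq_one_of_coprime hm hm₁ hcop with rfl | h
  · rfl
  · obtain rfl : m = 0 := by omega
    exact absurd hpp not_isPrimePow_zero

theorem stmt13 (q : ℕ) (x : ℤ) (hq : 2 < q) (hpp : IsPrimePow q)
    (hx : x ^ 2 = 2 * (q : ℤ) + 1) : q = 4 :=
  stmt13_general q x hpp hx
end
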